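/- Let κ_1, …, κ_n > 0 and κ(x) = ∑_{i=1}^n κ_i x_i². For real numbers α, β < n/2 + 1 and σ < t, and any x, y ∈ ℝⁿ: ∫_σ^t ∫_{ℝⁿ} (t-τ)^{-α} exp(-κ(x-ξ)/(4(t-τ))) · (τ-σ)^{-β} exp(-κ(ξ-y)/(4(τ-σ))) dξ dτ = (4π)^{n/2} (∏_i κ_i)^{-1/2} · B(n/2 - α + 1, n/2 - β + 1) · (t-σ)^{n/2+1-α-β} · exp(-κ(x-y)/(4(t-σ))), where B is the Beta function. -/

import Mathlib

open Real Finset MeasureTheory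

/-! With κ(z) = ∑ κᵢ zᵢ², the factor exp(-κ(z)/(4s)) is, up to normalisation, the heat kernel of
∑ κᵢ⁻¹ ∂ᵢ², and the space integral is its semigroup law: the integrand splits over coordinates, and
completing the square in each one-dimensional Gaussian integral gives
(4π pq/(p+q))^{n/2} (∏ κᵢ)^{-1/2} exp(-κ(x-y)/(4(p+q))) for p = t-τ, q = τ-σ. Since p + q = t - σ
does not depend on τ, what remains is ∫_σ^t (t-τ)^{n/2-α} (τ-σ)^{n/2-β} dτ, which the substitution
τ = t - (t-σ)u turns into (t-σ)^{n/2+1-α-β} B(n/2-α+1, n/2-β+1). -/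

theorem exp_neg_mul_sq_mul_exp_neg_mul_sq {a b : ℝ} (hab : a + b ≠ 0) (x y ξ : ℝ) :
    exp (-(a * (x - ξ) ^ 2)) * exp (-(b * (ξ - y) ^ 2)) =
      exp (-((a + b) * (ξ - (a * x + b * y) / (a + b)) ^ 2)) *
        exp (-(a * b / (a + b) * (x - y) ^ 2)) := by
  rw [← exp_add, ← exp_add]
  congr 1
  field_simp
  ring

theorem integral_exp_neg_mul_sq_mul_exp_neg_mul_sq {a b : ℝ} (hab : a + b ≠ 0) (x y : ℝ) :
    ∫ ξ, exp (-(a * (x - ξ) ^ 2)) * exp (-(b * (ξ - y) ^ 2)) =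
      √(π / (a + b)) * exp (-(a * b / (a + b) * (x - y) ^ 2)) := by
  simp_rw [exp_neg_mul_sq_mul_exp_neg_mul_sq hab, integral_mul_const,
    integral_sub_right_eq_self (fun ξ => exp (-((a + b) * ξ ^ 2))), ← neg_mul, integral_gaussian]

theorem integral_heatKernel_mul_heatKernel {k p q : ℝ} (hk : 0 < k) (hp : 0 < p) (hq : 0 < q)
    (x y : ℝ) :
    ∫ ξ, exp (-(k / (4 * p) * (x - ξ) ^ 2)) * exp (-(k / (4 * q) * (ξ - y) ^ 2)) =
      (4 * π * p * q / (p + q)) ^ (1 / 2 : ℝ) * k ^ (-(1 : ℝ) / 2) *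
        exp (-(k / (4 * (p + q)) * (x - y) ^ 2)) := by
  rw [integral_exp_neg_mul_sq_mul_exp_neg_mul_sq (by positivity)]
  have hvar : π / (k / (4 * p) + k / (4 * q)) = 4 * π * p * q / (p + q) / k := by
    field_simp
    ring
  have hrate : k / (4 * p) * (k / (4 * q)) / (k / (4 * p) + k / (4 * q)) = k / (4 * (p + q)) := by
    field_simp
    ring
  rw [hvar, hrate, sqrt_eq_rpow, div_rpow (by positivity) hk.le, div_eq_mul_inv,
    ← rpow_neg hk.le, neg_div]

theorem exp_neg_sum_div_eq_prod {ι : Type*} [Fintype ι] (κ z : ι → ℝ) (c : ℝ) :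
    exp (-(∑ i, κ i * z i) / c) = ∏ i, exp (-(κ i / c * z i)) := by
  rw [← exp_sum, neg_div, sum_div, ← sum_neg_distrib]
  simp_rw [div_mul_eq_mul_div]

theorem integral_heatKernel_mul_heatKernel_pi {ι : Type*} [Fintype ι] {κ : ι → ℝ}
    (hκ : ∀ i, 0 < κ i) {p q : ℝ} (hp : 0 < p) (hq : 0 < q) (x y : ι → ℝ) :
    ∫ ξ : ι → ℝ, exp (-(∑ i, κ i * (x i - ξ i) ^ 2) / (4 * p)) *
        exp (-(∑ i, κ i * (ξ i - y i) ^ 2) / (4 * q)) =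
      (4 * π * p * q / (p + q)) ^ ((Fintype.card ι : ℝ) / 2) * (∏ i, κ i) ^ (-(1 : ℝ) / 2) *
        exp (-(∑ i, κ i * (x i - y i) ^ 2) / (4 * (p + q))) := by
  simp_rw [exp_neg_sum_div_eq_prod, ← prod_mul_distrib]
  rw [integral_fintype_prod_volume_eq_prod (fun i ξ => exp (-(κ i / (4 * p) * (x i - ξ) ^ 2)) *
      exp (-(κ i / (4 * q) * (ξ - y i) ^ 2)))]
  simp_rw [integral_heatKernel_mul_heatKernel (hκ _) hp hq, prod_mul_distrib, prod_const,
    finsetProd_rpow _ _ fun i _ => (hκ i).le]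
  rw [← rpow_mul_natCast (by positivity), card_univ, one_div_mul_eq_div]

theorem integral_rpow_heatKernel_mul_rpow_heatKernel_pi {ι : Type*} [Fintype ι] {κ : ι → ℝ}
    (hκ : ∀ i, 0 < κ i) {p q : ℝ} (hp : 0 < p) (hq : 0 < q) (α β : ℝ) (x y : ι → ℝ) :
    ∫ ξ : ι → ℝ, p ^ (-α) * exp (-(∑ i, κ i * (x i - ξ i) ^ 2) / (4 * p)) *
        (q ^ (-β) * exp (-(∑ i, κ i * (ξ i - y i) ^ 2) / (4 * q))) =
      (4 * π) ^ ((Fintype.card ι : ℝ) / 2) * (∏ i, κ i) ^ (-(1 : ℝ) / 2) *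
        (p + q) ^ (-((Fintype.card ι : ℝ) / 2)) *
        exp (-(∑ i, κ i * (x i - y i) ^ 2) / (4 * (p + q))) *
        (p ^ ((Fintype.card ι : ℝ) / 2 - α) * q ^ ((Fintype.card ι : ℝ) / 2 - β)) := by
  set d : ℝ := (Fintype.card ι : ℝ) / 2
  have hpow : p ^ (-α) * q ^ (-β) * (4 * π * p * q / (p + q)) ^ d =
      (4 * π) ^ d * (p + q) ^ (-d) * (p ^ (d - α) * q ^ (d - β)) := by
    rw [div_rpow (by positivity) (by positivity), mul_rpow (by positivity) hq.le,
      mul_rpow (by positivity) hp.le, rpow_neg (by positivity : 0 ≤ p + q), sub_eq_neg_add,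
      sub_eq_neg_add, rpow_add hp, rpow_add hq]
    ring
  simp_rw [mul_mul_mul_comm (p ^ (-α))]
  rw [integral_const_mul, integral_heatKernel_mul_heatKernel_pi hκ hp hq, ← mul_assoc,
    ← mul_assoc, hpow]
  ring

theorem integral_Ioo_sub_rpow_mul_sub_rpow (a b : ℝ) {σ t : ℝ} (hσt : σ < t) :
    ∫ τ in Set.Ioo σ t, (t - τ) ^ a * (τ - σ) ^ b =
      (t - σ) ^ (a + b + 1) * ∫ u in (0 : ℝ)..1, u ^ a * (1 - u) ^ b := by
  have hT : 0 < t - σ := sub_pos.2 hσt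
  have hsubst : ∫ τ in σ..t, (t - τ) ^ a * (τ - σ) ^ b =
      (t - σ) * ∫ u in (0 : ℝ)..1, (t - (t - (t - σ) * u)) ^ a * (t - (t - σ) * u - σ) ^ b := by
    rw [intervalIntegral.integral_comp_sub_mul (fun τ => (t - τ) ^ a * (τ - σ) ^ b) hT.ne',
      smul_eq_mul, mul_inv_cancel_left₀ hT.ne', mul_one, mul_zero, sub_sub_cancel, sub_zero]
  have hscale : ∀ u ∈ Set.uIcc (0 : ℝ) 1,
      (t - (t - (t - σ) * u)) ^ a * (t - (t - σ) * u - σ) ^ b =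
        (t - σ) ^ (a + b) * (u ^ a * (1 - u) ^ b) := by
    intro u hu
    rw [Set.uIcc_of_le zero_le_one] at hu
    rw [sub_sub_cancel,
      show t - (t - σ) * u - σ = (t - σ) * (1 - u) by ring,
      mul_rpow hT.le hu.1, mul_rpow hT.le (sub_nonneg.2 hu.2), rpow_add hT]
    ring
  rw [← integral_Ioc_eq_integral_Ioo, ← intervalIntegral.integral_of_le hσt.le, hsubst,
    intervalIntegral.integral_congr hscale, intervalIntegral.integral_const_mul,
    rpow_add_one hT.ne']
  ring

theorem stmt8_general (n : ℕ) (κ : Fin n → ℝ) (hκ : ∀ i, 0 < κ i) (α β σ t : ℝ)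
    (hσt : σ < t) (x y : Fin n → ℝ) :
    (∫ τ in Set.Ioo σ t, ∫ ξ : Fin n → ℝ,
        (t - τ) ^ (-α) * Real.exp (-(∑ i, κ i * (x i - ξ i) ^ 2) / (4 * (t - τ))) *
          ((τ - σ) ^ (-β) *
            Real.exp (-(∑ i, κ i * (ξ i - y i) ^ 2) / (4 * (τ - σ))))) =
      (4 * Real.pi) ^ ((n : ℝ) / 2) * (∏ i, κ i) ^ (-(1 : ℝ) / 2) *
        (∫ u in (0 : ℝ)..1, u ^ ((n : ℝ) / 2 - α) * (1 - u) ^ ((n : ℝ) / 2 - β)) *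
        (t - σ) ^ ((n : ℝ) / 2 + 1 - α - β) *
        Real.exp (-(∑ i, κ i * (x i - y i) ^ 2) / (4 * (t - σ))) := by
  have hT : 0 < t - σ := sub_pos.2 hσt
  rw [setIntegral_congr_fun measurableSet_Ioo fun τ hτ => by
      rw [integral_rpow_heatKernel_mul_rpow_heatKernel_pi hκ (sub_pos.2 hτ.2) (sub_pos.2 hτ.1),
        sub_add_sub_cancel],
    integral_const_mul, integral_Ioo_sub_rpow_mul_sub_rpow _ _ hσt, Fintype.card_fin]
  have hexp : (t - σ) ^ (-((n : ℝ) / 2)) * (t - σ) ^ ((n : ℝ) / 2 - α + ((n : ℝ) / 2 - β) + 1) =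
      (t - σ) ^ ((n : ℝ) / 2 + 1 - α - β) := by
    rw [← rpow_add hT]
    ring_nf
  rw [← hexp]
  ring

theorem stmt8 (n : ℕ) (κ : Fin n → ℝ) (hκ : ∀ i, 0 < κ i) (α β σ t : ℝ)
    (hα : α < n / 2 + 1) (hβ : β < n / 2 + 1) (hσt : σ < t) (x y : Fin n → ℝ) :
    (∫ τ in Set.Ioo σ t, ∫ ξ : Fin n → ℝ,
        (t - τ) ^ (-α) * Real.exp (-(∑ i, κ i * (x i - ξ i) ^ 2) / (4 * (t - τ))) *
          ((τ - σ) ^ (-β) *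
            Real.exp (-(∑ i, κ i * (ξ i - y i) ^ 2) / (4 * (τ - σ))))) =
      (4 * Real.pi) ^ ((n : ℝ) / 2) * (∏ i, κ i) ^ (-(1 : ℝ) / 2) *
        (∫ u in (0 : ℝ)..1, u ^ ((n : ℝ) / 2 - α) * (1 - u) ^ ((n : ℝ) / 2 - β)) *
        (t - σ) ^ ((n : ℝ) / 2 + 1 - α - β) *
        Real.exp (-(∑ i, κ i * (x i - y i) ^ 2) / (4 * (t - σ))) :=
  stmt8_general n κ hκ α β σ t hσt x y
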